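/- arXiv:2207.03091 — 3 statements merged into one kernel-verified Lean document; each statement's English description precedes it below -/
import Mathlib

section
/- Let h = f + g be a BP function (f monotone nondecreasing normalized submodular, g monotone nondecreasing normalized supermodular with curvature κ^g < 1) on a finite ground set V, and let S* be an optimal solution of max{h(S) : |S| ≤ k}. If the sets S_0 = ∅ ⊂ S_1 ⊂ ⋯ ⊂ S_k are built greedily (each v_{t+1} maximizes h(v | S_t)), then for every t < k: h(S*) − h(S_{t+1}) ≤ (1 − (1−κ^g)/k)·(h(S*) − h(S_t)). Consequently h(S_k) ≥ (1 − e^{−(1−κ^g)})·h(S*). -/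
open Finset

def marg {V : Type*} [DecidableEq V] (f : Finset V → ℝ) (v : V) (S : Finset V) : ℝ :=
  f (insert v S) - f S

def Monot {V : Type*} (f : Finset V → ℝ) : Prop := ∀ A B : Finset V, A ⊆ B → f A ≤ f B

def Submod {V : Type*} [DecidableEq V] (f : Finset V → ℝ) : Prop :=
  ∀ A B : Finset V, ∀ v : V, A ⊆ B → v ∉ B → marg f v B ≤ marg f v A

def Supmod {V : Type*} [DecidableEq V] (g : Finset V → ℝ) : Prop :=
  ∀ A B : Finset V, ∀ v : V, A ⊆ B → v ∉ B → marg g v A ≤ marg g v B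

lemma submod_tel {V : Type*} [DecidableEq V] (f : Finset V → ℝ) (hfs : Submod f)
    (A : Finset V) : ∀ T : Finset V, Disjoint T A →
    f (A ∪ T) ≤ f A + ∑ w ∈ T, marg f w A := by
  intro T
  induction T using Finset.induction_on with
  | empty => simp
  | @insert x s hx ih =>
    intro hdisj
    have hxA : x ∉ A := by
      have := Finset.disjoint_left.mp hdisj (Finset.mem_insert_self x s)
      exact this
    have hds : Disjoint s A := Finset.disjoint_of_subset_left (Finset.subset_insert x s) hdisj
    have hxAs : x ∉ A ∪ s := by simp [hxA, hx]
    have h1 : marg f x (A ∪ s) ≤ marg f x A :=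
      hfs A (A ∪ s) x Finset.subset_union_left hxAs
    have heq : A ∪ insert x s = insert x (A ∪ s) := Finset.union_insert x A s
    have : f (A ∪ insert x s) = marg f x (A ∪ s) + f (A ∪ s) := by
      rw [heq, marg]; ring
    rw [this, Finset.sum_insert hx]
    have := ih hds
    linarith

lemma supmod_tel {V : Type*} [Fintype V] [DecidableEq V] (g : Finset V → ℝ) (hgs : Supmod g)
    (hgpos : ∀ v : V, 0 < marg g v (Finset.univ.erase v))
    (A : Finset V) : ∀ T : Finset V,
    g (A ∪ T) ≤ g A + ∑ w ∈ T, marg g w (Finset.univ.erase w) := by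
  intro T
  induction T using Finset.induction_on with
  | empty => simp
  | @insert x s hx ih =>
    rw [Finset.sum_insert hx]
    have heq : A ∪ insert x s = insert x (A ∪ s) := Finset.union_insert x A s
    by_cases hxAs : x ∈ A ∪ s
    · have : insert x (A ∪ s) = A ∪ s := Finset.insert_eq_self.mpr hxAs
      rw [heq, this]
      have := hgpos x
      linarith
    · have h1 : marg g x (A ∪ s) ≤ marg g x (Finset.univ.erase x) :=
        hgs (A ∪ s) (Finset.univ.erase x) x
          (fun y hy => Finset.mem_erase.mpr ⟨fun hyx => hxAs (hyx ▸ hy), Finset.mem_univ y⟩)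
          (Finset.notMem_erase x _)
      have : g (A ∪ insert x s) = marg g x (A ∪ s) + g (A ∪ s) := by
        rw [heq, marg]; ring
      rw [this]
      linarith

theorem stmt_3 {V : Type*} [Fintype V] [DecidableEq V]
    (f g : Finset V → ℝ) (κg : ℝ) (k : ℕ) (hk : 0 < k)
    (hf0 : f ∅ = 0) (hg0 : g ∅ = 0)
    (hfm : Monot f) (hgm : Monot g)
    (hfs : Submod f) (hgs : Supmod g)
    (hgpos : ∀ v : V, 0 < marg g v (Finset.univ.erase v))
    (hκg : ∀ v : V, g {v} ≥ (1 - κg) * marg g v (Finset.univ.erase v))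
    (hκg0 : 0 ≤ κg) (hκg1 : κg < 1)
    (h : Finset V → ℝ) (hh : ∀ S, h S = f S + g S)
    (v : ℕ → V) (S : ℕ → Finset V)
    (hS0 : S 0 = ∅)
    (hSsucc : ∀ t < k, S (t + 1) = insert (v t) (S t))
    -- greedy: v t maximizes the marginal gain h(· | S t)
    (hgreedy : ∀ t < k, ∀ w : V, marg h w (S t) ≤ marg h (v t) (S t))
    (Sstar : Finset V)
    (hcard : Sstar.card ≤ k)
    (hopt : ∀ T : Finset V, T.card ≤ k → h T ≤ h Sstar) :
    (∀ t < k, h Sstar - h (S (t + 1)) ≤ (1 - (1 - κg) / k) * (h Sstar - h (S t)))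
    ∧ h (S k) ≥ (1 - Real.exp (-(1 - κg))) * h Sstar := by
  have hκpos : (0:ℝ) < 1 - κg := by linarith
  have hkpos : (0:ℝ) < (k:ℝ) := by exact_mod_cast hk
  have hhm : Monot h := by
    intro A B hAB
    rw [hh, hh]
    have := hfm A B hAB
    have := hgm A B hAB
    linarith
  have hh0 : h ∅ = 0 := by rw [hh, hf0, hg0]; ring
  have hstarnn : 0 ≤ h Sstar := by
    have := hopt ∅ (by simp)
    rw [hh0] at this; linarith
  -- main per-step inequality
  have main : ∀ t < k, h Sstar - h (S (t + 1)) ≤ (1 - (1 - κg) / k) * (h Sstar - h (S t)) := by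
    intro t ht
    set A := S t with hA
    set M := marg h (v t) A with hM
    have hMnn : 0 ≤ M := by
      rw [hM, marg]
      have := hhm A (insert (v t) A) (Finset.subset_insert _ _)
      linarith
    set T := Sstar \ A with hT
    have hdisj : Disjoint T A := Finset.sdiff_disjoint
    -- each term bound
    have hterm : ∀ w ∈ T, marg f w A + marg g w (Finset.univ.erase w) ≤ M / (1 - κg) := by
      intro w hw
      have hwA : w ∉ A := (Finset.mem_sdiff.mp hw).2
      have hgw : (1 - κg) * marg g w (Finset.univ.erase w) ≤ marg g w A := by
        have h1 := hκg w
        have h2 : marg g w ∅ ≤ marg g w A :=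
          hgs ∅ A w (Finset.empty_subset A) hwA
        have h3 : marg g w ∅ = g {w} := by rw [marg, hg0]; simp
        linarith
      have hfnn : 0 ≤ marg f w A := by
        rw [marg]
        have := hfm A (insert w A) (Finset.subset_insert _ _)
        linarith
      have hgA : marg h w A ≤ M := hgreedy t ht w
      have hsum : marg h w A = marg f w A + marg g w A := by
        rw [marg, marg, marg, hh, hh]; ring
      -- (1-κg) * (marg f w A + marg g w (erase)) ≤ marg f w A + marg g w A ≤ M
      rw [le_div_iff₀ hκpos]
      nlinarith [hgpos w, hfnn, hκg0]
    have hsumbound : ∑ w ∈ T, (marg f w A + marg g w (Finset.univ.erase w)) ≤ (k:ℝ) * (M / (1 - κg)) := by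
      calc ∑ w ∈ T, (marg f w A + marg g w (Finset.univ.erase w))
          ≤ ∑ _w ∈ T, M / (1 - κg) := Finset.sum_le_sum hterm
        _ = (T.card : ℝ) * (M / (1 - κg)) := by rw [Finset.sum_const, nsmul_eq_mul]
        _ ≤ (k:ℝ) * (M / (1 - κg)) := by
            apply mul_le_mul_of_nonneg_right _ (by positivity)
            have : T.card ≤ k := le_trans (Finset.card_le_card (Finset.sdiff_subset)) hcard
            exact_mod_cast this
    have hcover : h Sstar ≤ h (A ∪ T) := by
      apply hhm
      intro y hy
      simp [hT, Finset.mem_union, Finset.mem_sdiff]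
      tauto
    have htel : h (A ∪ T) ≤ h A + ∑ w ∈ T, (marg f w A + marg g w (Finset.univ.erase w)) := by
      rw [hh, hh, Finset.sum_add_distrib]
      have h1 := submod_tel f hfs A T hdisj
      have h2 := supmod_tel g hgs hgpos A T
      linarith
    have hkey : h Sstar - h A ≤ (k:ℝ) * (M / (1 - κg)) := by linarith
    have hstep : h (S (t + 1)) = h A + M := by
      rw [hSsucc t ht, hM, marg]; ring
    rw [hstep]
    have : (1 - κg) / k * (h Sstar - h A) ≤ M := by
      rw [div_mul_eq_mul_div, div_le_iff₀ hkpos]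
      have hBM : M / (1 - κg) * (1 - κg) = M := div_mul_cancel₀ M (ne_of_gt hκpos)
      nlinarith [mul_le_mul_of_nonneg_right hkey (le_of_lt hκpos), hBM]
    have hexp : (1 - (1 - κg) / k) * (h Sstar - h A)
        = (h Sstar - h A) - (1 - κg) / k * (h Sstar - h A) := by ring
    linarith [hexp, this]
  refine ⟨main, ?_⟩
  set r : ℝ := 1 - (1 - κg) / k with hr
  have hr0 : 0 ≤ r := by
    rw [hr]
    have : (1 - κg) / k ≤ 1 := by
      rw [div_le_one hkpos]
      have : (1:ℝ) ≤ (k:ℝ) := by exact_mod_cast hk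
      linarith
    linarith
  have hiter : ∀ t ≤ k, h Sstar - h (S t) ≤ r ^ t * h Sstar := by
    intro t
    induction t with
    | zero => intro _; simp [hS0, hh0]
    | succ n ih =>
      intro hn
      have hnk : n < k := hn
      have h1 := main n hnk
      have h2 := ih (Nat.le_of_lt hnk)
      calc h Sstar - h (S (n+1)) ≤ r * (h Sstar - h (S n)) := h1
        _ ≤ r * (r ^ n * h Sstar) := by
            apply mul_le_mul_of_nonneg_left h2 hr0
        _ = r ^ (n+1) * h Sstar := by ring
  have hfin := hiter k le_rfl
  have hrexp : r ^ k ≤ Real.exp (-(1 - κg)) := by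
    have h1 : r ≤ Real.exp (-((1 - κg) / k)) := by
      have := Real.add_one_le_exp (-((1 - κg) / k))
      linarith
    calc r ^ k ≤ (Real.exp (-((1 - κg) / k))) ^ k := pow_le_pow_left₀ hr0 h1 k
      _ = Real.exp (-((1 - κg) / k) * k) := by rw [← Real.exp_nat_mul]; ring_nf
      _ = Real.exp (-(1 - κg)) := by
          congr 1
          field_simp
  have : r ^ k * h Sstar ≤ Real.exp (-(1 - κg)) * h Sstar :=
    mul_le_mul_of_nonneg_right hrexp hstarnn
  nlinarith
end

section
/- Let f: 2^V → ℝ be a monotone nondecreasing normalized submodular function with curvature κ_f, and define the modular lower bound l_1(S) = Σ_{j∈S} f(j | V∖{j}). Then l_1(S) ≥ (1 − κ_f)·f(S) for every S ⊆ V, and the totally normalized function f_1(S) = f(S) − l_1(S) is monotone nondecreasing, normalized, and submodular. -/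
open Finset

lemma subadd {V : Type*} [DecidableEq V] (f : Finset V → ℝ) (hf0 : f ∅ = 0)
    (hfs : Submod f) : ∀ S : Finset V, f S ≤ ∑ j ∈ S, f {j} := by
  intro S
  induction S using Finset.induction_on with
  | empty => simp [hf0]
  | @insert v S hv ih =>
    rw [Finset.sum_insert hv]
    have h := hfs ∅ S v (Finset.empty_subset _) hv
    have : marg f v ∅ = f {v} := by simp [marg, hf0]
    have h2 : f (insert v S) - f S ≤ f {v} := by
      rw [← this]; exact h
    linarith

lemma keylem {V : Type*} [Fintype V] [DecidableEq V] (f : Finset V → ℝ)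
    (hfs : Submod f) :
    ∀ (D A : Finset V), Disjoint D A →
      f (A ∪ D) - f A ≥ ∑ j ∈ D, marg f j (Finset.univ.erase j) := by
  intro D
  induction D using Finset.induction_on with
  | empty => intro A _; simp
  | @insert v D hv ih =>
    intro A hdisj
    have hvA : v ∉ A := by
      have := Finset.disjoint_left.mp hdisj (Finset.mem_insert_self v D)
      exact this
    have hDA : Disjoint D A := by
      exact Finset.disjoint_of_subset_left (Finset.subset_insert v D) hdisj
    have hvAD : v ∉ A ∪ D := by simp [hvA, hv]
    have hsub : A ∪ D ⊆ Finset.univ.erase v := by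
      intro x hx
      rcases eq_or_ne x v with rfl | hne
      · exact absurd hx hvAD
      · exact Finset.mem_erase.mpr ⟨hne, Finset.mem_univ x⟩
    have hmarg : marg f v (Finset.univ.erase v) ≤ marg f v (A ∪ D) :=
      hfs (A ∪ D) (Finset.univ.erase v) v hsub (by simp)
    have hunion : A ∪ insert v D = insert v (A ∪ D) := by
      ext x; simp [or_comm, or_left_comm]
    rw [Finset.sum_insert hv, hunion]
    have hih := ih A hDA
    have : marg f v (A ∪ D) = f (insert v (A ∪ D)) - f (A ∪ D) := rfl
    linarith

theorem stmt_4 {V : Type*} [Fintype V] [DecidableEq V]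
    (f : Finset V → ℝ) (κf : ℝ)
    (hf0 : f ∅ = 0) (hfm : Monot f) (hfs : Submod f)
    (hfpos : ∀ v : V, 0 < f {v})
    -- κf is the submodular curvature: ∀ v, f(v | V∖{v}) ≥ (1 − κf)·f({v})
    (hκf : ∀ v : V, marg f v (Finset.univ.erase v) ≥ (1 - κf) * f {v})
    (hκf0 : 0 ≤ κf) (hκf1 : κf ≤ 1)
    (l1 f1 : Finset V → ℝ)
    (hl1 : ∀ S : Finset V, l1 S = ∑ j ∈ S, marg f j (Finset.univ.erase j))
    (hf1 : ∀ S : Finset V, f1 S = f S - l1 S) :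
    (∀ S : Finset V, l1 S ≥ (1 - κf) * f S)
    ∧ Monot f1 ∧ f1 ∅ = 0 ∧ Submod f1 := by
  have hmono : ∀ A B : Finset V, A ⊆ B → f1 A ≤ f1 B := by
    intro A B hAB
    have hD := keylem f hfs (B \ A) A (Finset.sdiff_disjoint)
    rw [Finset.union_sdiff_of_subset hAB] at hD
    have hl : l1 B - l1 A = ∑ j ∈ B \ A, marg f j (Finset.univ.erase j) := by
      rw [hl1, hl1, ← Finset.sum_sdiff hAB]; ring
    rw [hf1, hf1]
    linarith
  refine ⟨?_, hmono, ?_, ?_⟩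
  · intro S
    rw [hl1]
    have h1 : ∑ j ∈ S, (1 - κf) * f {j} ≤ ∑ j ∈ S, marg f j (Finset.univ.erase j) :=
      Finset.sum_le_sum fun j _ => hκf j
    have h2 : (1 - κf) * f S ≤ (1 - κf) * ∑ j ∈ S, f {j} := by
      apply mul_le_mul_of_nonneg_left (subadd f hf0 hfs S) (by linarith)
    rw [← Finset.mul_sum] at h1
    linarith
  · rw [hf1, hl1]; simp [hf0]
  · intro A B v hAB hvB
    have hvA : v ∉ A := fun h => hvB (hAB h)
    have hlA : l1 (insert v A) - l1 A = marg f v (Finset.univ.erase v) := by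
      rw [hl1, hl1, Finset.sum_insert hvA]; ring
    have hlB : l1 (insert v B) - l1 B = marg f v (Finset.univ.erase v) := by
      rw [hl1, hl1, Finset.sum_insert hvB]; ring
    have hff := hfs A B v hAB hvB
    simp only [marg, hf1] at *
    linarith
end

section
/- In the distorted greedy analysis, at every step j the selected element s_j satisfies π_j(s_j | S_{j-1}) + r_j ≥ (1/k)(1 − 1/k)^{k−(j+1)}·(f_1(S*) − f_1(S_{j-1})) + (1/k)·l(S*), where π_j is the distorted gain, f_1 the totally normalized submodular part and l the modular part. -/
open Finset

lemma sum_marg_ge {V : Type*} [DecidableEq V] (f : Finset V → ℝ) (hf : Submod f)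
    (A T : Finset V) : f (A ∪ T) - f A ≤ ∑ e ∈ T, marg f e A := by
  induction T using Finset.induction_on with
  | empty => simp
  | @insert x T' hx ih =>
    rw [Finset.sum_insert hx]
    by_cases hxA : x ∈ A
    · have h1 : A ∪ insert x T' = A ∪ T' := by
        ext y; simp only [Finset.mem_union, Finset.mem_insert]
        constructor
        · rintro (h | (rfl | h)) <;> tauto
        · tauto
      have h2 : marg f x A = 0 := by
        unfold marg; rw [Finset.insert_eq_self.mpr hxA]; ring
      rw [h1, h2]; linarith
    · have hxAT : x ∉ A ∪ T' := by simp [hxA, hx]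
      have h1 : A ∪ insert x T' = insert x (A ∪ T') := by rw [Finset.union_insert]
      have h2 := hf A (A ∪ T') x Finset.subset_union_left hxAT
      unfold marg at h2
      rw [h1]
      simp only [marg] at ih ⊢
      linarith

lemma marg_nonneg_sup {V : Type*} [DecidableEq V] (g : Finset V → ℝ) (hg0 : g ∅ = 0)
    (hgs : Supmod g) (hsing : ∀ v : V, g {v} = 0) (x : V) (A : Finset V) :
    0 ≤ marg g x A := by
  by_cases hxA : x ∈ A
  · unfold marg; rw [Finset.insert_eq_self.mpr hxA]; simp
  · have h := hgs ∅ A x (Finset.empty_subset A) hxA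
    unfold marg at h ⊢
    simp [hg0, hsing x] at h
    linarith

theorem stmt_8 {V : Type*} [Fintype V] [DecidableEq V]
    (f1 g1 l : Finset V → ℝ) (k : ℕ) (hk : 0 < k)
    -- f1 : totally normalized submodular part
    (hf10 : f1 ∅ = 0) (hf1m : Monot f1) (hf1s : Submod f1)
    -- l : nonnegative modular part
    (hlmod : ∀ S : Finset V, l S = ∑ j ∈ S, l {j})
    (hlnn : ∀ v : V, 0 ≤ l {v})
    -- g1 : totally normalized supermodular part (curvature 1: vanishes on singletons)
    (hg10 : g1 ∅ = 0) (hg1m : Monot g1) (hg1s : Supmod g1)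
    (hg1sing : ∀ v : V, g1 {v} = 0)
    (π : ℕ → V → Finset V → ℝ)
    (hπ : ∀ (j : ℕ) (w : V) (A : Finset V),
      π j w A = (1 - 1 / (k : ℝ)) ^ (k - (j + 1)) * marg f1 w A + marg g1 w A + l {w})
    (v : ℕ → V) (S : ℕ → Finset V) (r : ℕ → ℝ)
    (hS0 : S 0 = ∅)
    (hSsucc : ∀ j < k, S (j + 1) = insert (v j) (S j))
    (hr : ∀ j, 0 ≤ r j)
    (hgreedy : ∀ j < k, ∀ w : V, π j (v j) (S j) ≥ π j w (S j) - r j)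
    (Sstar : Finset V)
    (hcard : Sstar.card = k) :
    ∀ j < k, π j (v j) (S j) + r j
      ≥ (1 / (k : ℝ)) * (1 - 1 / (k : ℝ)) ^ (k - (j + 1)) * (f1 Sstar - f1 (S j))
        + (1 / (k : ℝ)) * l Sstar := by
  intro j hj
  have hkR : (0 : ℝ) < k := by exact_mod_cast hk
  set c : ℝ := (1 - 1 / (k : ℝ)) ^ (k - (j + 1)) with hc
  have hcnn : 0 ≤ c := by
    apply pow_nonneg
    have : 1 / (k : ℝ) ≤ 1 := by
      rw [div_le_one hkR]; exact_mod_cast hk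
    linarith
  -- sum of greedy inequalities over Sstar
  have hsum : (k : ℝ) * (π j (v j) (S j) + r j) ≥ ∑ e ∈ Sstar, π j e (S j) := by
    have : ∑ e ∈ Sstar, π j e (S j) ≤ ∑ e ∈ Sstar, (π j (v j) (S j) + r j) := by
      apply Finset.sum_le_sum
      intro e _
      have := hgreedy j hj e
      linarith
    rw [Finset.sum_const, hcard] at this
    simpa [nsmul_eq_mul, mul_add] using this
  -- lower bound on the sum
  have hsum2 : ∑ e ∈ Sstar, π j e (S j) ≥ c * (f1 Sstar - f1 (S j)) + l Sstar := by
    have heq : ∑ e ∈ Sstar, π j e (S j)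
        = c * (∑ e ∈ Sstar, marg f1 e (S j)) + (∑ e ∈ Sstar, marg g1 e (S j))
          + ∑ e ∈ Sstar, l {e} := by
      rw [Finset.mul_sum, ← Finset.sum_add_distrib, ← Finset.sum_add_distrib]
      apply Finset.sum_congr rfl
      intro e _
      rw [hπ j e (S j)]
    rw [heq, ← hlmod]
    have hf : f1 Sstar - f1 (S j) ≤ ∑ e ∈ Sstar, marg f1 e (S j) := by
      have h1 := sum_marg_ge f1 hf1s (S j) Sstar
      have h2 : f1 Sstar ≤ f1 (S j ∪ Sstar) := hf1m _ _ Finset.subset_union_right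
      linarith
    have hg : 0 ≤ ∑ e ∈ Sstar, marg g1 e (S j) :=
      Finset.sum_nonneg fun e _ => marg_nonneg_sup g1 hg10 hg1s hg1sing e (S j)
    nlinarith
  have := mul_le_mul_of_nonneg_left (le_trans hsum2.le hsum.le) (le_of_lt (by positivity : (0:ℝ) < 1 / k))
  have hdiv : (1 / (k : ℝ)) * ((k : ℝ) * (π j (v j) (S j) + r j)) = π j (v j) (S j) + r j := by
    field_simp
  rw [hdiv] at this
  calc π j (v j) (S j) + r j ≥ (1 / (k : ℝ)) * (c * (f1 Sstar - f1 (S j)) + l Sstar) := this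
    _ = (1 / (k : ℝ)) * c * (f1 Sstar - f1 (S j)) + (1 / (k : ℝ)) * l Sstar := by ring
end
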